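/- With the sequences ε_l = ε_0/4^l and r_l as in the iteration (r_1 = r_0/8, r_{l+1} = q_{2^l}(r_l - δ_l), δ_l = δ/4^l, δ = r_0/c_1, c_1 = 4^{b+2}/3, and r_∞ := r_0/4^{b+2} a lower bound for all r_l), one has for every k ≥ 1: ∑_{l=0}^{k-1} ε_l/(r_l - r_{l+1}) ≤ (8/7)(ε_0/r_0) + (ε_0/r_∞)·2^{b/2}. -/

import Mathlib

/-!
For `l ≥ 1` write `q_{2^l} = exp (-x_l)` with `x_l = b l log 2 / 2^l`. Since `r_l ≥ r_∞` and
`δ_l ≥ 0`, the gap `r_l - r_{l+1}` is at least `(1 - e^{-x_l}) r_∞ ≥ x_l e^{-x_l} r_∞`, and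
`2^{-l} ≤ x_l ≤ (b/2) log 2` bounds this below by `2^{-b/2} 2^{-l} r_∞`. So the `l`-th term is at
most `(ε_0/r_∞) 2^{b/2} 2^{-l}`, a geometric series summing to at most `(ε_0/r_∞) 2^{b/2}`,
while the term `l = 0` is exactly `(8/7) ε_0/r_0`.
-/

open Real Finset

lemma two_mul_le_two_pow (n : ℕ) : 2 * n ≤ 2 ^ n := by
  cases n with
  | zero => norm_num
  | succ n => have := n.lt_two_pow_self; rw [pow_succ]; omega

lemma mul_exp_neg_le_one_sub_exp_neg (x : ℝ) : x * exp (-x) ≤ 1 - exp (-x) := by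
  have h := mul_le_mul_of_nonneg_right (add_one_le_exp x) (exp_pos (-x)).le
  rw [← exp_add, add_neg_cancel, exp_zero] at h
  linarith

lemma two_pow_rpow_neg_eq_exp (b : ℝ) (l : ℕ) :
    ((2 : ℝ) ^ l) ^ (-(b / 2 ^ l)) = exp (-(b * l * log 2 / 2 ^ l)) := by
  rw [rpow_def_of_pos (by positivity), log_pow]
  ring_nf

lemma half_pow_le_mul_log_two_div_two_pow {b : ℝ} (hb : 1 ≤ b * log 2) {l : ℕ} (hl : 1 ≤ l) :
    (1 / 2) ^ l ≤ b * l * log 2 / 2 ^ l := by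
  rw [one_div_pow]
  gcongr
  have : (1 : ℝ) ≤ l := by exact_mod_cast hl
  nlinarith

lemma mul_log_two_div_two_pow_le {b : ℝ} (hb : 0 ≤ b) (l : ℕ) :
    b * l * log 2 / 2 ^ l ≤ b / 2 * log 2 := by
  have h : (2 * l : ℝ) ≤ 2 ^ l := by exact_mod_cast two_mul_le_two_pow l
  rw [div_le_iff₀ (by positivity)]
  have := mul_nonneg hb (log_pos one_lt_two).le
  nlinarith

lemma le_sub_exp_neg_mul {x ρ s d : ℝ} (hx : 0 ≤ x) (hρ : 0 ≤ ρ) (hs : ρ ≤ s) (hd : 0 ≤ d) :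
    ρ * (x * exp (-x)) ≤ s - exp (-x) * (s - d) := by
  have h1 := mul_exp_neg_le_one_sub_exp_neg x
  have h2 : exp (-x) ≤ 1 := exp_le_one_iff.mpr (by linarith)
  nlinarith [exp_pos (-x), mul_le_mul_of_nonneg_left hs (sub_nonneg.mpr h2)]

lemma le_sub_two_pow_rpow_mul {b ρ s d : ℝ} (hb : 1 ≤ b * log 2) {l : ℕ} (hl : 1 ≤ l)
    (hρ : 0 ≤ ρ) (hs : ρ ≤ s) (hd : 0 ≤ d) :
    ρ * (2 ^ (-(b / 2)) * (1 / 2) ^ l) ≤ s - ((2 : ℝ) ^ l) ^ (-(b / 2 ^ l)) * (s - d) := by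
  have hb0 : 0 ≤ b := by nlinarith [log_pos one_lt_two]
  set x := b * l * log 2 / 2 ^ l
  have hx := half_pow_le_mul_log_two_div_two_pow hb hl
  have hexp : (2 : ℝ) ^ (-(b / 2)) ≤ exp (-x) := by
    rw [rpow_def_of_pos two_pos, exp_le_exp]
    linarith [mul_log_two_div_two_pow_le hb0 l]
  rw [two_pow_rpow_neg_eq_exp]
  calc ρ * (2 ^ (-(b / 2)) * (1 / 2) ^ l) ≤ ρ * (x * exp (-x)) := by
        rw [mul_comm x]
        gcongr
    _ ≤ _ := le_sub_exp_neg_mul (by linarith [pow_pos (one_half_pos (α := ℝ)) l]) hρ hs hd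

lemma div_four_pow_div_le {ε ρ b g : ℝ} (hε : 0 ≤ ε) (hρ : 0 < ρ) {l : ℕ}
    (hg : ρ * (2 ^ (-(b / 2)) * (1 / 2) ^ l) ≤ g) :
    ε / 4 ^ l / g ≤ ε / ρ * 2 ^ (b / 2) * (1 / 2) ^ l := by
  calc ε / 4 ^ l / g ≤ ε / 4 ^ l / (ρ * (2 ^ (-(b / 2)) * (1 / 2) ^ l)) := by
        gcongr
    _ = ε / ρ * 2 ^ (b / 2) * (1 / 2) ^ l := by
        have h4 : (4 : ℝ) ^ l = 2 ^ l * 2 ^ l := by rw [← mul_pow]; norm_num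
        rw [rpow_neg two_pos.le, one_div_pow, h4]
        field_simp

lemma sum_range_succ_le_of_le_half_pow {f : ℕ → ℝ} {C : ℝ} (hC : 0 ≤ C)
    (hf : ∀ i, f (i + 1) ≤ C * (1 / 2) ^ (i + 1)) (n : ℕ) :
    ∑ i ∈ range n, f (i + 1) ≤ C :=
  calc ∑ i ∈ range n, f (i + 1) ≤ ∑ i ∈ range n, C * (1 / 2) ^ (i + 1) :=
        sum_le_sum fun i _ => hf i
    _ = C / 2 * ∑ i ∈ range n, (1 / 2 : ℝ) ^ i := by rw [mul_sum]; congr 1 with i; ring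
    _ ≤ C / 2 * 2 := by gcongr; exact sum_geometric_two_le n
    _ = C := by ring

/-- With `ε_l = ε_0/4^l` and the radii `r_l` of the iteration, for every `k ≥ 1`,
`∑_{l<k} ε_l/(r_l - r_{l+1}) ≤ (8/7)(ε_0/r_0) + (ε_0/r_∞) 2^{b/2}`. -/
theorem stmt7 (r0 b ε0 : ℝ) (hr0 : 0 < r0) (hε0 : 0 < ε0)
    (hb : 8 + 2 * Real.log 48 / Real.log 2 ≤ b)
    (c1 δ rinf : ℝ) (hc1 : c1 = (4 : ℝ) ^ (b + 2) / 3) (hδ : δ = r0 / c1)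
    (hrinf : rinf = r0 / (4 : ℝ) ^ (b + 2))
    (q : ℕ → ℝ) (hq : ∀ m : ℕ, 0 < m → q m = (m : ℝ) ^ (-(b / (m : ℝ))))
    (r : ℕ → ℝ) (hr00 : r 0 = r0) (hr1 : r 1 = r0 / 8)
    (hrec : ∀ l : ℕ, 1 ≤ l → r (l + 1) = q (2 ^ l) * (r l - δ / 4 ^ l))
    (hlow : ∀ l : ℕ, 1 ≤ l → rinf ≤ r l) :
    ∀ k : ℕ, 1 ≤ k →
      ∑ l ∈ Finset.range k, (ε0 / 4 ^ l) / (r l - r (l + 1)) ≤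
        8 / 7 * (ε0 / r0) + ε0 / rinf * (2 : ℝ) ^ (b / 2) := by
  have hb_log : 1 ≤ b * log 2 := by
    have : 0 ≤ 2 * log 48 / log 2 := by positivity
    nlinarith [log_two_gt_d9]
  have hrinf_pos : 0 < rinf := by rw [hrinf]; positivity
  have hδ_nonneg : 0 ≤ δ := by rw [hδ, hc1]; positivity
  have hgap (l : ℕ) (hl : 1 ≤ l) :
      rinf * (2 ^ (-(b / 2)) * (1 / 2) ^ l) ≤ r l - r (l + 1) := by
    rw [hrec l hl, hq _ (by positivity), Nat.cast_pow, Nat.cast_ofNat]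
    exact le_sub_two_pow_rpow_mul hb_log hl hrinf_pos.le (hlow l hl) (by positivity)
  intro k hk
  obtain ⟨n, rfl⟩ := Nat.exists_eq_add_of_le' hk
  have hfirst : ε0 / 4 ^ 0 / (r 0 - r (0 + 1)) = 8 / 7 * (ε0 / r0) := by
    rw [hr00, zero_add, hr1]
    field_simp
    ring
  have hrest := sum_range_succ_le_of_le_half_pow (f := fun l => ε0 / 4 ^ l / (r l - r (l + 1)))
    (by positivity) (fun i => div_four_pow_div_le hε0.le hrinf_pos (hgap (i + 1) (by omega))) n
  rw [Finset.sum_range_succ', hfirst]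
  linarith
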